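/- For p, q ∈ [0,1]^n define γ̂_i = |p_i−q_i|/(1+|p_i+q_i−1|), p̂_i = 1/2 + γ̂_i/2, q̂_i = 1/2 − γ̂_i/2. Then |p̂_i − q̂_i| ≥ |p_i − q_i|/2 for each i, and ‖Ber(p) − Ber(q)‖_TV ≥ ‖Ber(p̂) − Ber(q̂)‖_TV. -/

import Mathlib

open Finset

/-!
In each coordinate, the pair `Ber(p̂ᵢ), Ber(q̂ᵢ)` is the image of `Ber(pᵢ), Ber(qᵢ)` under one binary
channel, i.e. a Markov kernel on `{0,1}` sending `Ber(r)` to `Ber(b + (a - b) r)` with `a, b ∈ [0,1]`: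
the affine map `r ↦ b + (a - b) r` must send `pᵢ, qᵢ` to `p̂ᵢ, q̂ᵢ`, and the normalisation
`1 + |pᵢ + qᵢ - 1|` in `γ̂ᵢ` is exactly what keeps `a` and `b` inside `[0,1]`. The product of these
channels maps `Ber(p), Ber(q)` to `Ber(p̂), Ber(q̂)`, and total variation cannot increase under a
Markov kernel.
-/

/-- Total variation distance between two distributions on a finite set. -/
noncomputable def tv {Ω : Type*} [Fintype Ω] (P Q : Ω → ℝ) : ℝ :=
  (1/2) * ∑ ω, |P ω - Q ω|

/-- Product Bernoulli distribution on `{0,1}^n` with parameters `p`. -/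
def berProd {n : ℕ} (p : Fin n → ℝ) : (Fin n → Bool) → ℝ :=
  fun ω => ∏ i, if ω i then p i else 1 - p i

lemma tv_comp_markov_le {Ω Ω' : Type*} [Fintype Ω] [Fintype Ω'] (K : Ω → Ω' → ℝ)
    (hK_nonneg : ∀ ω ω', 0 ≤ K ω ω') (hK_sum : ∀ ω, ∑ ω', K ω ω' = 1) (P Q : Ω → ℝ) :
    tv (fun ω' => ∑ ω, K ω ω' * P ω) (fun ω' => ∑ ω, K ω ω' * Q ω) ≤ tv P Q := by
  unfold tv
  gcongr
  calc ∑ ω', |∑ ω, K ω ω' * P ω - ∑ ω, K ω ω' * Q ω|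
      ≤ ∑ ω', ∑ ω, |K ω ω' * P ω - K ω ω' * Q ω| := by
        gcongr with ω' _
        rw [← sum_sub_distrib]
        exact abs_sum_le_sum_abs _ _
    _ = ∑ ω, |P ω - Q ω| := by
        rw [sum_comm]
        refine sum_congr rfl fun ω _ => ?_
        simp only [← mul_sub, abs_mul, abs_of_nonneg (hK_nonneg ω _), ← sum_mul, hK_sum, one_mul]

section berProd

variable {n : ℕ}

lemma sum_berProd (r : Fin n → ℝ) : ∑ ω, berProd r ω = 1 := by
  unfold berProd
  rw [← Fintype.prod_sum fun i (x : Bool) => if x then r i else 1 - r i]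
  simp

lemma berProd_nonneg {r : Fin n → ℝ} (hr : ∀ i, r i ∈ Set.Icc (0:ℝ) 1) (ω : Fin n → Bool) :
    0 ≤ berProd r ω :=
  prod_nonneg fun i _ => by
    obtain ⟨h0, h1⟩ := hr i
    split_ifs <;> linarith

/-- Feeding `Ber(r)` into the product of the binary channels `1 ↦ Ber(aᵢ)`, `0 ↦ Ber(bᵢ)`. -/
lemma sum_berProd_ite_mul_berProd (a b r : Fin n → ℝ) (ω' : Fin n → Bool) :
    ∑ ω, berProd (fun i => if ω i then a i else b i) ω' * berProd r ω =
      berProd (fun i => b i + (a i - b i) * r i) ω' := by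
  unfold berProd
  simp only [← prod_mul_distrib]
  rw [← Fintype.prod_sum fun i (x : Bool) =>
    (if ω' i then (if x then a i else b i) else 1 - (if x then a i else b i)) *
      (if x then r i else 1 - r i)]
  refine prod_congr rfl fun i _ => ?_
  cases ω' i <;> simp only [Fintype.sum_bool, if_true, if_false, Bool.false_eq_true] <;> ring

lemma tv_berProd_affine_le {a b : Fin n → ℝ} (ha : ∀ i, a i ∈ Set.Icc (0:ℝ) 1)
    (hb : ∀ i, b i ∈ Set.Icc (0:ℝ) 1) (p q : Fin n → ℝ) :
    tv (berProd fun i => b i + (a i - b i) * p i) (berProd fun i => b i + (a i - b i) * q i) ≤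
      tv (berProd p) (berProd q) := by
  have hab : ∀ ω : Fin n → Bool, ∀ i, (if ω i then a i else b i) ∈ Set.Icc (0:ℝ) 1 :=
    fun ω i => by split_ifs; exacts [ha i, hb i]
  have h := tv_comp_markov_le (fun ω => berProd fun i => if ω i then a i else b i)
    (fun ω => berProd_nonneg (hab ω)) (fun ω => sum_berProd _) (berProd p) (berProd q)
  simpa only [sum_berProd_ite_mul_berProd] using h

end berProd

lemma half_add_div_mem_Icc {c D : ℝ} (hD : 0 < D) (hc : |c| ≤ D) :
    1 / 2 + c / (2 * D) ∈ Set.Icc (0:ℝ) 1 := by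
  obtain ⟨h₁, h₂⟩ := abs_le.1 hc
  constructor
  · have : -(1 / 2) ≤ c / (2 * D) := by rw [le_div_iff₀ (by positivity)]; linarith
    linarith
  · have : c / (2 * D) ≤ 1 / 2 := by rw [div_le_iff₀ (by positivity)]; linarith
    linarith

lemma exists_affine_symmetrize (p q : ℝ) :
    ∃ a ∈ Set.Icc (0:ℝ) 1, ∃ b ∈ Set.Icc (0:ℝ) 1,
      b + (a - b) * p = 1 / 2 + |p - q| / (1 + |p + q - 1|) / 2 ∧
      b + (a - b) * q = 1 / 2 - |p - q| / (1 + |p + q - 1|) / 2 := by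
  set s := p + q - 1
  set D := 1 + |s|
  have hD : 0 < D := by positivity
  obtain ⟨e, he, hed⟩ : ∃ e : ℝ, |e| ≤ 1 ∧ e * (p - q) = |p - q| := by
    rcases le_total q p with h | h
    · exact ⟨1, by simp, by rw [one_mul, abs_of_nonneg (sub_nonneg.2 h)]⟩
    · exact ⟨-1, by simp, by rw [abs_of_nonpos (sub_nonpos.2 h)]; ring⟩
  have hbound : ∀ t, |e * t| ≤ |t| := fun t => by
    rw [abs_mul]; exact mul_le_of_le_one_left (abs_nonneg t) he
  -- `a - b = e / D`, and `b` is then fixed by the midpoint `(p + q) / 2 ↦ 1 / 2`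
  refine ⟨1 / 2 + e * (1 - s) / (2 * D),
    half_add_div_mem_Icc hD ((hbound _).trans ((abs_sub 1 s).trans_eq (by rw [abs_one]))),
    1 / 2 + e * (-(1 + s)) / (2 * D),
    half_add_div_mem_Icc hD ((hbound _).trans
      (((abs_neg _).trans_le (abs_add_le 1 s)).trans_eq (by rw [abs_one]))), ?_, ?_⟩
  all_goals
    rw [← hed]
    field_simp
    ring

lemma abs_sub_div_two_le_symmetrized {p q : ℝ} (hp : p ∈ Set.Icc (0:ℝ) 1)
    (hq : q ∈ Set.Icc (0:ℝ) 1) : |p - q| / 2 ≤ |p - q| / (1 + |p + q - 1|) := by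
  obtain ⟨hp₀, hp₁⟩ := hp
  obtain ⟨hq₀, hq₁⟩ := hq
  have : |p + q - 1| ≤ 1 := abs_le.2 ⟨by linarith, by linarith⟩
  gcongr
  linarith

theorem symmetrization {n : ℕ} (p q : Fin n → ℝ)
    (hp : ∀ i, p i ∈ Set.Icc (0:ℝ) 1) (hq : ∀ i, q i ∈ Set.Icc (0:ℝ) 1) :
    let γ : Fin n → ℝ := fun i => |p i - q i| / (1 + |p i + q i - 1|)
    let phat : Fin n → ℝ := fun i => 1/2 + γ i / 2
    let qhat : Fin n → ℝ := fun i => 1/2 - γ i / 2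
    (∀ i, |phat i - qhat i| ≥ |p i - q i| / 2) ∧
    tv (berProd p) (berProd q) ≥ tv (berProd phat) (berProd qhat) := by
  intro γ phat qhat
  refine ⟨fun i => ?_, ?_⟩
  · have hγ : phat i - qhat i = γ i := by simp only [phat, qhat]; ring
    rw [hγ, abs_of_nonneg (by positivity)]
    exact abs_sub_div_two_le_symmetrized (hp i) (hq i)
  · choose a ha b hb hpa hqb using fun i => exists_affine_symmetrize (p i) (q i)
    have h := tv_berProd_affine_le ha hb p q
    rwa [funext hpa, funext hqb] at h
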